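/- Let (A, q) be a metric group of exponent n that is generated by its isotropic elements. Then for every n-th root of unity ζ ∈ kˣ there exists x ∈ A with q(x) = ζ. -/

import Mathlib

/-- The bilinear form associated to a quadratic form `q : A → kˣ`. -/
def Bform {A k : Type*} [AddCommGroup A] [Field k] (q : A → kˣ) (x y : A) : kˣ :=
  q (x + y) * (q x * q y)⁻¹

/-- `q : A → kˣ` is a quadratic form: `q(-x) = q(x)` and its associated form is bilinear. -/
def IsQuadraticForm {A k : Type*} [AddCommGroup A] [Field k] (q : A → kˣ) : Prop :=
  (∀ x, q (-x) = q x) ∧ ∀ x y z, Bform q (x + y) z = Bform q x z * Bform q y z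

/-- Non-degeneracy of the bilinear form associated to `q`. -/
def Nondeg {A k : Type*} [AddCommGroup A] [Field k] (q : A → kˣ) : Prop :=
  ∀ x, (∀ y, Bform q x y = 1) → x = 0

/-!
Write `B` for `Bform q` and `n` for the exponent of `A`. If `B(x, y) ^ c = 1` for all isotropic
`x, y`, then by bimultiplicativity and isotropic generation `B(c • u, v) = 1` for all `u, v`, so
`n ∣ c` by nondegeneracy. Hence for each prime `p ∣ n` some isotropic pair has
`B(x, y) ^ (n / p) ≠ 1`; multiplying it by the prime-to-`p` part of `n` moves it into the
`p`-primary part without losing this. Primary parts for distinct primes are orthogonal, so the sums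
of these pairs form one isotropic pair `x, y` with `B(x, y)` of order `n`, and
`q(x + i • y) = B(x, y) ^ i` runs through all `n`-th roots of unity.
-/

lemma AddChar.map_sum_eq_prod {ι A M : Type*} [AddCommMonoid A] [CommMonoid M]
    (ψ : AddChar A M) (s : Finset ι) (f : ι → A) :
    ψ (∑ i ∈ s, f i) = ∏ i ∈ s, ψ (f i) :=
  map_prod ψ.toMonoidHom (fun i ↦ Multiplicative.ofAdd (f i)) s

lemma AddChar.eq_one_of_closure_eq_top {A M : Type*} [AddGroup A] [Group M] {S : Set A}
    (hS : AddSubgroup.closure S = ⊤) {ψ : AddChar A M} (h : ∀ x ∈ S, ψ x = 1) (x : A) :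
    ψ x = 1 := by
  have hx : x ∈ AddSubgroup.closure S := hS ▸ AddSubgroup.mem_top x
  induction hx using AddSubgroup.closure_induction with
  | mem x hx => exact h x hx
  | zero => exact ψ.map_zero_eq_one
  | add x y _ _ hx hy => rw [ψ.map_add_eq_mul, hx, hy, one_mul]
  | neg x _ hx => rw [ψ.map_neg_eq_inv, hx, inv_one]

lemma Nat.ordProj_dvd_div_of_ne {n p p' : ℕ} (hp : p.Prime) (hp' : p'.Prime) (hne : p' ≠ p)
    (hpn : p ∣ n) : ordProj[p'] n ∣ n / p := by
  refine (Nat.coprime_pow_primes _ 1 hp' hp hne).dvd_of_dvd_mul_right ?_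
  rw [pow_one, Nat.div_mul_cancel hpn]
  exact Nat.ordProj_dvd n p'

section

variable {A k : Type*} [AddCommGroup A] [Field k] {q : A → kˣ}

lemma Bform_comm (q : A → kˣ) (x y : A) : Bform q x y = Bform q y x := by
  rw [Bform, Bform, add_comm, mul_comm (q x)]

lemma q_add (q : A → kˣ) (x y : A) : q (x + y) = q x * q y * Bform q x y := by
  rw [Bform, mul_comm, inv_mul_cancel_right]

namespace IsQuadraticForm

def bformLeft (hq : IsQuadraticForm q) (y : A) : AddChar A kˣ where
  toFun x := Bform q x y
  map_zero_eq_one' := by simpa using hq.2 0 0 y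
  map_add_eq_mul' x x' := hq.2 x x' y

@[simp]
lemma bformLeft_apply (hq : IsQuadraticForm q) (x y : A) : hq.bformLeft y x = Bform q x y := rfl

lemma Bform_zero_left (hq : IsQuadraticForm q) (y : A) : Bform q 0 y = 1 :=
  (hq.bformLeft y).map_zero_eq_one

lemma Bform_zero_right (hq : IsQuadraticForm q) (x : A) : Bform q x 0 = 1 := by
  rw [Bform_comm, hq.Bform_zero_left]

lemma Bform_nsmul_left (hq : IsQuadraticForm q) (m : ℕ) (x y : A) :
    Bform q (m • x) y = Bform q x y ^ m :=
  (hq.bformLeft y).map_nsmul_eq_pow m x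

lemma Bform_nsmul_right (hq : IsQuadraticForm q) (m : ℕ) (x y : A) :
    Bform q x (m • y) = Bform q x y ^ m := by
  rw [Bform_comm, hq.Bform_nsmul_left, Bform_comm]

lemma Bform_sum_left (hq : IsQuadraticForm q) {ι : Type*} (s : Finset ι) (f : ι → A) (y : A) :
    Bform q (∑ i ∈ s, f i) y = ∏ i ∈ s, Bform q (f i) y :=
  (hq.bformLeft y).map_sum_eq_prod s f

lemma Bform_sum_right (hq : IsQuadraticForm q) {ι : Type*} (s : Finset ι) (f : ι → A) (x : A) :
    Bform q x (∑ i ∈ s, f i) = ∏ i ∈ s, Bform q x (f i) := by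
  simp only [Bform_comm q x, hq.Bform_sum_left]

lemma q_zero (hq : IsQuadraticForm q) : q 0 = 1 := by
  simpa [hq.Bform_zero_left] using q_add q 0 0

lemma Bform_self (hq : IsQuadraticForm q) (x : A) : Bform q x x = q x ^ 2 := by
  have h := q_add q x (-x)
  have hneg : Bform q (-x) x = (Bform q x x)⁻¹ := (hq.bformLeft x).map_neg_eq_inv x
  rwa [add_neg_cancel, hq.q_zero, hq.1, Bform_comm, hneg, ← sq, eq_mul_inv_iff_mul_eq,
    one_mul] at h

lemma q_nsmul_of_isotropic (hq : IsQuadraticForm q) {x : A} (hx : q x = 1) (m : ℕ) :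
    q (m • x) = 1 := by
  induction m with
  | zero => rw [zero_smul, hq.q_zero]
  | succ m ih => rw [succ_nsmul, q_add q, ih, hx, hq.Bform_nsmul_left, hq.Bform_self, hx]; simp

lemma q_add_nsmul_of_isotropic (hq : IsQuadraticForm q) {x y : A} (hx : q x = 1) (hy : q y = 1)
    (m : ℕ) : q (x + m • y) = Bform q x y ^ m := by
  rw [q_add q, hx, hq.q_nsmul_of_isotropic hy, hq.Bform_nsmul_right, one_mul, one_mul]

lemma Bform_eq_one_of_coprime (hq : IsQuadraticForm q) {a b : ℕ} (hab : a.Coprime b) {x y : A}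
    (hx : a • x = 0) (hy : b • y = 0) : Bform q x y = 1 := by
  have ha : Bform q x y ^ a = 1 := by rw [← hq.Bform_nsmul_left, hx, hq.Bform_zero_left]
  have hb : Bform q x y ^ b = 1 := by rw [← hq.Bform_nsmul_right, hy, hq.Bform_zero_right]
  simpa [hab.gcd_eq_one] using pow_gcd_eq_one.mpr ⟨ha, hb⟩

lemma q_sum_of_isotropic {ι : Type*} (hq : IsQuadraticForm q) {s : Finset ι} {f : ι → A}
    (hiso : ∀ i ∈ s, q (f i) = 1)
    (horth : (s : Set ι).Pairwise fun i j ↦ Bform q (f i) (f j) = 1) :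
    q (∑ i ∈ s, f i) = 1 := by
  classical
  induction s using Finset.induction_on with
  | empty => simpa using hq.q_zero
  | insert a s ha ih =>
    rw [Finset.sum_insert ha, q_add q, hq.Bform_sum_right, Finset.prod_eq_one, hiso a (by simp),
      ih (fun i hi ↦ hiso i (by simp [hi])) (horth.mono (by simp)), one_mul, one_mul]
    exact fun j hj ↦ horth (by simp) (by simp [hj]) (by rintro rfl; exact ha hj)

lemma Bform_sum_sum {ι : Type*} (hq : IsQuadraticForm q) {s : Finset ι} {f g : ι → A}
    (horth : (s : Set ι).Pairwise fun i j ↦ Bform q (f i) (g j) = 1) :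
    Bform q (∑ i ∈ s, f i) (∑ i ∈ s, g i) = ∏ i ∈ s, Bform q (f i) (g i) := by
  rw [hq.Bform_sum_left]
  refine Finset.prod_congr rfl fun i hi ↦ ?_
  rw [hq.Bform_sum_right]
  exact Finset.prod_eq_single_of_mem i hi fun j hj hji ↦ horth hi hj hji.symm

lemma exponent_dvd_of_isotropic_Bform_pow_eq_one (hq : IsQuadraticForm q) (hnd : Nondeg q)
    (hgen : AddSubgroup.closure {x : A | q x = 1} = ⊤) {c : ℕ}
    (h : ∀ x y, q x = 1 → q y = 1 → Bform q x y ^ c = 1) : AddMonoid.exponent A ∣ c := by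
  have hiso (y : A) (hy : q y = 1) (u : A) : Bform q u y ^ c = 1 :=
    AddChar.eq_one_of_closure_eq_top hgen (ψ := hq.bformLeft y ^ c) (fun x hx ↦ h x y hx hy) u
  have hall (u v : A) : Bform q u v ^ c = 1 := by
    rw [Bform_comm]
    exact AddChar.eq_one_of_closure_eq_top hgen (ψ := hq.bformLeft u ^ c)
      (fun y hy ↦ by simpa [Bform_comm] using hiso y hy u) v
  refine AddMonoid.exponent_dvd_of_forall_nsmul_eq_zero fun u ↦ hnd _ fun v ↦ ?_
  rw [hq.Bform_nsmul_left, hall]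

lemma Bform_pow_exponent (hq : IsQuadraticForm q) (x y : A) :
    Bform q x y ^ AddMonoid.exponent A = 1 := by
  rw [← hq.Bform_nsmul_left, AddMonoid.exponent_nsmul_eq_zero, hq.Bform_zero_left]

lemma exists_isotropic_Bform_pow_exponent_div_ne_one [Finite A] (hq : IsQuadraticForm q)
    (hnd : Nondeg q) (hgen : AddSubgroup.closure {x : A | q x = 1} = ⊤) {p : ℕ} (hp : p.Prime)
    (hpn : p ∣ AddMonoid.exponent A) :
    ∃ x y, q x = 1 ∧ q y = 1 ∧ Bform q x y ^ (AddMonoid.exponent A / p) ≠ 1 := by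
  by_contra! h
  have hdvd := hq.exponent_dvd_of_isotropic_Bform_pow_eq_one hnd hgen h
  have hpos : 0 < AddMonoid.exponent A := Nat.pos_of_ne_zero AddMonoid.exponent_ne_zero_of_finite
  have hle := Nat.le_of_dvd (Nat.div_pos (Nat.le_of_dvd hpos hpn) hp.pos) hdvd
  exact (Nat.div_lt_self hpos hp.one_lt).not_ge hle

lemma exists_isotropic_primary_Bform_pow_exponent_div_ne_one [Finite A]
    (hq : IsQuadraticForm q) (hnd : Nondeg q) (hgen : AddSubgroup.closure {x : A | q x = 1} = ⊤)
    {p : ℕ} (hp : p.Prime) (hpn : p ∣ AddMonoid.exponent A) :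
    ∃ x y, q x = 1 ∧ q y = 1 ∧ ordProj[p] (AddMonoid.exponent A) • x = 0 ∧
      ordProj[p] (AddMonoid.exponent A) • y = 0 ∧
      Bform q x y ^ (AddMonoid.exponent A / p) ≠ 1 := by
  set n := AddMonoid.exponent A
  obtain ⟨x, y, hx, hy, hxy⟩ :=
    hq.exists_isotropic_Bform_pow_exponent_div_ne_one hnd hgen hp hpn
  set c := ordCompl[p] n
  have hkill (z : A) : ordProj[p] n • c • z = 0 := by
    rw [smul_smul, Nat.ordProj_mul_ordCompl_eq_self]
    exact AddMonoid.exponent_nsmul_eq_zero z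
  refine ⟨c • x, c • y, hq.q_nsmul_of_isotropic hx c, hq.q_nsmul_of_isotropic hy c, hkill x,
    hkill y, ?_⟩
  rw [hq.Bform_nsmul_left, hq.Bform_nsmul_right, ← pow_mul, ← pow_mul,
    show c * (c * (n / p)) = n / p * (c * c) by ring, pow_mul]
  intro h
  have : Fact p.Prime := ⟨hp⟩
  have hord : orderOf (Bform q x y ^ (n / p)) = p :=
    orderOf_eq_prime (by rw [← pow_mul, Nat.div_mul_cancel hpn, hq.Bform_pow_exponent]) hxy
  have hpc : p ∣ c * c := hord ▸ orderOf_dvd_of_pow_eq_one h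
  exact Nat.not_dvd_ordCompl hp AddMonoid.exponent_ne_zero_of_finite
    ((hp.dvd_mul.mp hpc).elim id id)

lemma exists_isotropic_orderOf_Bform_eq_exponent [Finite A] (hq : IsQuadraticForm q)
    (hnd : Nondeg q) (hgen : AddSubgroup.closure {x : A | q x = 1} = ⊤) :
    ∃ x y, q x = 1 ∧ q y = 1 ∧ orderOf (Bform q x y) = AddMonoid.exponent A := by
  set n := AddMonoid.exponent A
  have hn0 : n ≠ 0 := AddMonoid.exponent_ne_zero_of_finite
  set s := n.primeFactors
  choose! x y hx hy hxk hyk hxy using fun p (hp : p ∈ s) ↦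
    hq.exists_isotropic_primary_Bform_pow_exponent_div_ne_one hnd hgen
      (Nat.prime_of_mem_primeFactors hp) (Nat.dvd_of_mem_primeFactors hp)
  have horth {u v : A} {p p' : ℕ} (hp : p ∈ s) (hp' : p' ∈ s) (hne : p ≠ p')
      (hu : ordProj[p] n • u = 0) (hv : ordProj[p'] n • v = 0) : Bform q u v = 1 :=
    hq.Bform_eq_one_of_coprime (Nat.coprime_pow_primes _ _ (Nat.prime_of_mem_primeFactors hp)
      (Nat.prime_of_mem_primeFactors hp') hne) hu hv
  refine ⟨∑ p ∈ s, x p, ∑ p ∈ s, y p,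
    hq.q_sum_of_isotropic hx fun p hp p' hp' hne ↦ horth hp hp' hne (hxk p hp) (hxk p' hp'),
    hq.q_sum_of_isotropic hy fun p hp p' hp' hne ↦ horth hp hp' hne (hyk p hp) (hyk p' hp'),
    orderOf_eq_of_pow_and_pow_div_prime (Nat.pos_of_ne_zero hn0) (hq.Bform_pow_exponent _ _)
      fun p hp hpn ↦ ?_⟩
  have hps : p ∈ s := Nat.mem_primeFactors.mpr ⟨hp, hpn, hn0⟩
  rw [hq.Bform_sum_sum fun p hp p' hp' hne ↦ horth hp hp' hne (hxk p hp) (hyk p' hp'),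
    ← Finset.prod_pow, Finset.prod_eq_single_of_mem p hps fun p' hp' hne ↦ ?_]
  · exact hxy p hps
  have hdvd := Nat.ordProj_dvd_div_of_ne hp (Nat.prime_of_mem_primeFactors hp') hne hpn
  rw [← hq.Bform_nsmul_left, addOrderOf_dvd_iff_nsmul_eq_zero.mp
    ((addOrderOf_dvd_of_nsmul_eq_zero (hxk p' hp')).trans hdvd), hq.Bform_zero_left]

end IsQuadraticForm

end

theorem stmt7_general {k : Type*} [Field k]
    {A : Type*} [AddCommGroup A] [Finite A]
    (q : A → kˣ) (hq : IsQuadraticForm q) (hnd : Nondeg q)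
    (n : ℕ) (hn : AddMonoid.exponent A = n)
    (hgen : AddSubgroup.closure {x : A | q x = 1} = ⊤) :
    ∀ ζ : kˣ, ζ ^ n = 1 → ∃ x : A, q x = ζ := by
  intro ζ hζ
  obtain ⟨x, y, hx, hy, hord⟩ := hq.exists_isotropic_orderOf_Bform_eq_exponent hnd hgen
  have : NeZero n := ⟨hn ▸ AddMonoid.exponent_ne_zero_of_finite⟩
  have hprim : IsPrimitiveRoot (Bform q x y) n := hn ▸ hord ▸ IsPrimitiveRoot.orderOf _
  obtain ⟨i, -, hi⟩ := hprim.eq_pow_of_mem_rootsOfUnity ((mem_rootsOfUnity n ζ).mpr hζ)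
  exact ⟨x + i • y, by rw [hq.q_add_nsmul_of_isotropic hx hy, hi]⟩

/-- An isotropically generated metric group of exponent `n` attains every `n`-th root
of unity as a value of `q`. -/
theorem stmt7 {k : Type*} [Field k] [CharZero k] [IsAlgClosed k]
    {A : Type*} [AddCommGroup A] [Finite A]
    (q : A → kˣ) (hq : IsQuadraticForm q) (hnd : Nondeg q)
    (n : ℕ) (hn : AddMonoid.exponent A = n)
    (hgen : AddSubgroup.closure {x : A | q x = 1} = ⊤) :
    ∀ ζ : kˣ, ζ ^ n = 1 → ∃ x : A, q x = ζ :=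
  stmt7_general q hq hnd n hn hgen
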